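/- Let Ψ be a finite irreducible crystallographic root system with base Δ of cardinality m > 1, and let a ∈ Δ. Then the number of roots of Ψ that do not lie in the linear span of Δ∖{a} is strictly greater than 2; equivalently, #Ψ > #Ψ' + 2, where Ψ' = Ψ ∩ span(Δ∖{a}). (Counting claim used in the proof of Lemma 2.) -/

import Mathlib

open Set

/-- A root system is a root pairing for which the roots and coroots span their ambient modules
(Mathlib's former structure `RootSystem`, removed in favour of the class `IsRootSystem`). -/
structure RootSystem (ι R M N : Type*) [CommRing R] [AddCommGroup M] [Module R M]
    [AddCommGroup N] [Module R N] extends RootPairing ι R M N where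
  span_eq_top : Submodule.span R (range toRootPairing.root) = ⊤
  span_eq_top' : Submodule.span R (range toRootPairing.coroot) = ⊤

/-- A root pairing is irreducible if its set of roots admits no partition into two nonempty
mutually orthogonal parts. -/
def RootPairingIsIrreducible {ι R M N : Type*} [CommRing R] [AddCommGroup M] [Module R M]
    [AddCommGroup N] [Module R N] (P : RootPairing ι R M N) : Prop :=
  ∀ s : Set ι, s.Nonempty → sᶜ.Nonempty → ∃ i ∈ s, ∃ j ∈ sᶜ, P.pairing i j ≠ 0

/-- A base (set of simple roots) of a root system: a linearly independent set of roots such that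
every root is either a nonnegative integer combination or a nonpositive integer combination of
the roots in the base. -/
structure RootSystemIsBase {ι M N : Type*} [AddCommGroup M] [Module ℝ M]
    [AddCommGroup N] [Module ℝ N] (P : RootSystem ι ℝ M N) (Δ : Set ι) : Prop where
  linearIndependent : LinearIndependent ℝ (fun i : Δ => P.root i)
  pos_or_neg : ∀ i : ι, P.root i ∈ AddSubmonoid.closure (P.root '' Δ) ∨
    -P.root i ∈ AddSubmonoid.closure (P.root '' Δ)

/-! If a subspace `W` contains some root and misses another, irreducibility yields roots
`α_i ∈ W` and `α_j ∉ W` with `⟨α_i, α_j^∨⟩ ≠ 0`. Then `α_j`, `s_j α_j = -α_j` and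
`s_j α_i = α_i - ⟨α_i, α_j^∨⟩ α_j` are three distinct roots outside `W`. For
`W = span (Δ \ {a})` the first condition holds because `|Δ| > 1`, the second because `α_a ∉ W`
by linear independence of the base. -/

namespace RootPairing

variable {ι K M N : Type*} [Field K] [AddCommGroup M] [Module K M] [AddCommGroup N] [Module K N]

theorem root_reflectionPerm_notMem_of_pairing_ne_zero (P : RootPairing ι K M N)
    {W : Submodule K M} {i j : ι} (hi : P.root i ∈ W) (hj : P.root j ∉ W)
    (hij : P.pairing i j ≠ 0) :
    P.root (P.reflectionPerm j i) ∉ W := by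
  rw [root_reflectionPerm, reflection_apply_root]
  intro hk
  have : P.pairing i j • P.root j ∈ W := by simpa using W.sub_mem hi hk
  exact hj ((W.smul_mem_iff hij).mp this)

theorem two_lt_ncard_root_notMem [Finite ι] [NeZero (2 : K)] (P : RootPairing ι K M N)
    (hirr : RootPairingIsIrreducible P) {W : Submodule K M}
    (hin : ∃ i, P.root i ∈ W) (hout : ∃ j, P.root j ∉ W) :
    2 < {i | P.root i ∉ W}.ncard := by
  obtain ⟨i, hi, j, hj, hij⟩ := hirr {i | P.root i ∈ W} hin hout
  change P.root i ∈ W at hi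
  change P.root j ∉ W at hj
  have hi_ne_j : i ≠ j := fun h ↦ hj (h ▸ hi)
  refine (two_lt_ncard).mpr ⟨j, hj, P.reflectionPerm j j, ?_, P.reflectionPerm j i,
    P.root_reflectionPerm_notMem_of_pairing_ne_zero hi hj hij, P.ne_neg j, ?_, ?_⟩
  · simpa [root_reflectionPerm] using hj
  · intro h
    have : P.root i = -P.root j :=
      P.root_eq_neg_iff.mpr (by nth_rw 2 [h]; rw [reflectionPerm_self])
    exact hj (by simpa [this] using hi)
  · exact fun h ↦ hi_ne_j ((P.reflectionPerm j).injective h).symm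

end RootPairing

theorem RootSystemIsBase.root_notMem_span_diff_singleton {ι M N : Type*} [AddCommGroup M]
    [Module ℝ M] [AddCommGroup N] [Module ℝ N] {P : RootSystem ι ℝ M N} {Δ : Set ι}
    (hΔ : RootSystemIsBase P Δ) {a : ι} (ha : a ∈ Δ) :
    P.root a ∉ Submodule.span ℝ (P.root '' (Δ \ {a})) := by
  have hΔ' : LinearIndepOn ℝ P.root Δ := hΔ.linearIndependent
  rw [(hΔ'.mono sdiff_subset).notMem_span_iff, insert_sdiff_singleton, insert_eq_of_mem ha]
  exact ⟨hΔ', by simp⟩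

theorem card_roots_not_in_span_gt_two_general
    {ι M N : Type*} [Fintype ι] [AddCommGroup M] [Module ℝ M] [AddCommGroup N] [Module ℝ N]
    (P : RootSystem ι ℝ M N)
    (hirr : RootPairingIsIrreducible P.toRootPairing)
    (Δ : Set ι) (hΔ : RootSystemIsBase P Δ)
    (m : ℕ) (hm : 1 < m) (hcard : Nat.card Δ = m)
    (a : ι) (ha : a ∈ Δ) :
    2 < Nat.card {i : ι | P.root i ∉ Submodule.span ℝ (P.root '' (Δ \ {a}))} ∧
    Nat.card {i : ι | P.root i ∈ Submodule.span ℝ (P.root '' (Δ \ {a}))} + 2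
      < Fintype.card ι := by
  set W := Submodule.span ℝ (P.root '' (Δ \ {a}))
  obtain ⟨b, hb, hba⟩ : ∃ b ∈ Δ, b ≠ a :=
    exists_ne_of_one_lt_ncard (by rwa [← Nat.card_coe_set_eq, hcard]) a
  have hout : 2 < {i | P.root i ∉ W}.ncard :=
    P.two_lt_ncard_root_notMem hirr ⟨b, Submodule.subset_span ⟨b, ⟨hb, hba⟩, rfl⟩⟩
      ⟨a, hΔ.root_notMem_span_diff_singleton ha⟩
  have hsum := ncard_add_ncard_compl {i | P.root i ∈ W}
  rw [Nat.card_eq_fintype_card] at hsum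
  simp only [Nat.card_coe_set_eq]
  exact ⟨hout, by rw [compl_ofPred] at hsum; omega⟩

/-- Let `Ψ` be a finite irreducible crystallographic root system with base `Δ` of cardinality
`m > 1`, and let `a ∈ Δ`. Then the number of roots of `Ψ` that do not lie in the linear span of
`Δ \ {a}` is strictly greater than `2`; equivalently, `#Ψ > #Ψ' + 2`, where
`Ψ' = Ψ ∩ span (Δ \ {a})`. -/
theorem card_roots_not_in_span_gt_two
    {ι M N : Type*} [Fintype ι] [AddCommGroup M] [Module ℝ M] [AddCommGroup N] [Module ℝ N]
    (P : RootSystem ι ℝ M N)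
    (hcrys : P.IsCrystallographic)
    (hirr : RootPairingIsIrreducible P.toRootPairing)
    (Δ : Set ι) (hΔ : RootSystemIsBase P Δ)
    (m : ℕ) (hm : 1 < m) (hcard : Nat.card Δ = m)
    (a : ι) (ha : a ∈ Δ) :
    2 < Nat.card {i : ι | P.root i ∉ Submodule.span ℝ (P.root '' (Δ \ {a}))} ∧
    Nat.card {i : ι | P.root i ∈ Submodule.span ℝ (P.root '' (Δ \ {a}))} + 2
      < Fintype.card ι :=
  card_roots_not_in_span_gt_two_general P hirr Δ hΔ m hm hcard a ha
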